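/- If v₁, v₂ ∈ Ha(F, x̄), then Cl²(F, x̄)(v₁, v₂) is nonempty. -/

import Mathlib

/-!
Take `0` as the second-order direction and `v₁`, `v₂` themselves as the first-order ones.
Since `v₁` is hypertangent, `x' + λ' v₁ ∈ F` for `x' ∈ F` near `x̄` and small `λ' > 0`; this point
is still near `x̄`, so the hypertangency of `v₂` gives `x' + λ' v₁ + λ'' v₂ ∈ F` as well.
-/

open Filter Topology

variable {X : Type*} [NormedAddCommGroup X] [NormedSpace ℝ X]

/-- The Hadamard (hypertangent) cone. -/
def Ha (F : Set X) (xbar : X) : Set X :=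
  {h | ∃ U ∈ nhds xbar, ∃ W ∈ nhds h, ∃ lam > (0:ℝ),
    ∀ x' ∈ F ∩ U, ∀ lam' : ℝ, 0 < lam' → lam' ≤ lam → ∀ w ∈ W, x' + lam' • w ∈ F}

/-- The second-order Clarke tangent set. -/
def Cl2 (F : Set X) (xbar v1 v2 : X) : Set X :=
  {v | ∀ V ∈ nhds (0:X), ∀ V1 ∈ nhds (0:X), ∀ V2 ∈ nhds (0:X),
    ∃ U ∈ nhds xbar, ∃ lam1 > (0:ℝ), ∃ lam2 > (0:ℝ),
      ∀ x' ∈ F ∩ U, ∀ lam' lam'' : ℝ, 0 < lam' → lam' ≤ lam1 → 0 < lam'' → lam'' ≤ lam2 →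
        ∃ v' v'' u : X, v' - v1 ∈ V1 ∧ x' + lam' • v' ∈ F ∧
          v'' - v2 ∈ V2 ∧ x' + lam'' • v'' ∈ F ∧
          u - v ∈ V ∧ x' + lam' • v' + lam'' • v'' + (4 * lam' * lam'') • u ∈ F}

theorem eventually_add_smul_mem_of_mem_Ha {F : Set X} {xbar h : X} (hh : h ∈ Ha F xbar) :
    ∀ᶠ p : X × ℝ in 𝓝 (xbar, 0), p.1 ∈ F → 0 < p.2 → p.1 + p.2 • h ∈ F := by
  obtain ⟨U, hU, W, hW, lam, hlam, hmem⟩ := hh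
  filter_upwards [prod_mem_nhds hU (Iic_mem_nhds hlam)] with ⟨x, t⟩ ⟨hxU, htle⟩ hxF ht
  exact hmem x ⟨hxF, hxU⟩ t ht htle h (mem_of_mem_nhds hW)

theorem eventually_add_smul_add_smul_mem_of_mem_Ha {F : Set X} {xbar v1 v2 : X}
    (hv1 : v1 ∈ Ha F xbar) (hv2 : v2 ∈ Ha F xbar) :
    ∀ᶠ p : X × ℝ × ℝ in 𝓝 (xbar, 0, 0), p.1 ∈ F → 0 < p.2.1 → 0 < p.2.2 →
      p.1 + p.2.1 • v1 ∈ F ∧ p.1 + p.2.2 • v2 ∈ F ∧ p.1 + p.2.1 • v1 + p.2.2 • v2 ∈ F := by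
  have step (v : X) (hv : v ∈ Ha F xbar) {f : X × ℝ × ℝ → X × ℝ} (hf : Continuous f)
      (hf₀ : f (xbar, 0, 0) = (xbar, 0)) :
      ∀ᶠ p in 𝓝 (xbar, 0, 0), (f p).1 ∈ F → 0 < (f p).2 → (f p).1 + (f p).2 • v ∈ F :=
    (hf.tendsto' _ _ hf₀).eventually (eventually_add_smul_mem_of_mem_Ha hv)
  filter_upwards [step v1 hv1 (by fun_prop : Continuous fun p : X × ℝ × ℝ ↦ (p.1, p.2.1)) rfl,
    step v2 hv2 (by fun_prop : Continuous fun p : X × ℝ × ℝ ↦ (p.1, p.2.2)) rfl,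
    step v2 hv2 (by fun_prop : Continuous fun p : X × ℝ × ℝ ↦ (p.1 + p.2.1 • v1, p.2.2))
      (by simp)] with p h1 h2 h12 hxF hs ht
  exact ⟨h1 hxF hs, h2 hxF ht, h12 (h1 hxF hs) ht⟩

theorem exists_forall_Ioc_of_eventually_nhdsGT {p : ℝ → Prop} (h : ∀ᶠ s in 𝓝[>] 0, p s) :
    ∃ a > 0, ∀ s, 0 < s → s ≤ a → p s := by
  obtain ⟨a, ha, hsub⟩ := mem_nhdsGT_iff_exists_Ioc_subset.1 h
  exact ⟨a, ha, fun s hs hsa ↦ hsub ⟨hs, hsa⟩⟩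

theorem exists_nhds_forall_Ioc_Ioc_of_eventually {Y : Type*} [TopologicalSpace Y] {y : Y}
    {P : Y × ℝ × ℝ → Prop} (h : ∀ᶠ p in 𝓝 (y, 0, 0), P p) :
    ∃ U ∈ 𝓝 y, ∃ a > 0, ∃ b > 0,
      ∀ x ∈ U, ∀ s t, 0 < s → s ≤ a → 0 < t → t ≤ b → P (x, s, t) := by
  rw [nhds_prod_eq, nhds_prod_eq, eventually_prod_iff] at h
  obtain ⟨pU, hpU, pst, hpst, hP⟩ := h
  obtain ⟨ps, hps, pt, hpt, hst⟩ := eventually_prod_iff.1 hpst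
  obtain ⟨a, ha, hsa⟩ := exists_forall_Ioc_of_eventually_nhdsGT (nhdsWithin_le_nhds hps)
  obtain ⟨b, hb, htb⟩ := exists_forall_Ioc_of_eventually_nhdsGT (nhdsWithin_le_nhds hpt)
  exact ⟨{x | pU x}, hpU, a, ha, b, hb, fun x hx s t hs hsa' ht htb' ↦
    hP hx (hst (hsa s hs hsa') (htb t ht htb'))⟩

theorem cl2_nonempty_general (F : Set X) (xbar : X) (v1 v2 : X)
    (hv1 : v1 ∈ Ha F xbar) (hv2 : v2 ∈ Ha F xbar) :
    (Cl2 F xbar v1 v2).Nonempty := by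
  refine ⟨0, fun V hV V1 hV1 V2 hV2 ↦ ?_⟩
  obtain ⟨U, hU, lam1, hlam1, lam2, hlam2, hmem⟩ :=
    exists_nhds_forall_Ioc_Ioc_of_eventually (eventually_add_smul_add_smul_mem_of_mem_Ha hv1 hv2)
  refine ⟨U, hU, lam1, hlam1, lam2, hlam2, ?_⟩
  rintro x ⟨hxF, hxU⟩ s t hs hsle ht htle
  obtain ⟨h1, h2, h12⟩ := hmem x hxU s t hs hsle ht htle hxF hs ht
  refine ⟨v1, v2, 0, ?_, h1, ?_, h2, ?_, by simpa using h12⟩ <;> rw [sub_self]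
  exacts [mem_of_mem_nhds hV1, mem_of_mem_nhds hV2, mem_of_mem_nhds hV]

theorem cl2_nonempty (F : Set X) (xbar : X) (hx : xbar ∈ F) (v1 v2 : X)
    (hv1 : v1 ∈ Ha F xbar) (hv2 : v2 ∈ Ha F xbar) :
    (Cl2 F xbar v1 v2).Nonempty :=
  cl2_nonempty_general F xbar v1 v2 hv1 hv2
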